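/- Let ε > 0 and let φ : S¹ → S¹ be continuous with d_{S¹}(φ(ζ), ζ) < ε for every ζ ∈ S¹. If w ∈ 𝔻 satisfies ξ_φ(w) = 0 (i.e. w is a barycenter of φ), then |w| < 2ε. -/

import Mathlib

/-!
Let `M(z) = (z - w) / (1 - w̄ z)`. On the circle `M(e^{ix}) = e^{iΘ(x)}` for a strictly
increasing lift `Θ` (`mobiusAngle w`) with `Θ - id` periodic. By the mean value property the
average of `M` over the circle is `M(0) = -w`, while the average of `M ∘ φ` vanishes. Writing
`φ(e^{ix}) = e^{i(x+θ)}` with `|θ| < ε`, the chord `|M(e^{ix}) - M(φ(e^{ix}))|` is shorter than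
the arc `Θ(x+ε) - Θ(x-ε)`, whose integral over a period is `4πε` by periodicity of `Θ - id`.
Hence `2π|w| < 4πε`.
-/

/-- Arc-length distance on the unit circle: the infimum of `|x₁ − x₂|` over
representatives `ζ₁ = e^{ix₁}`, `ζ₂ = e^{ix₂}`. -/
noncomputable def dS1 (ζ₁ ζ₂ : ℂ) : ℝ :=
  sInf {d : ℝ | ∃ x₁ x₂ : ℝ, ζ₁ = Complex.exp (Complex.I * (x₁ : ℂ)) ∧
    ζ₂ = Complex.exp (Complex.I * (x₂ : ℂ)) ∧ d = |x₁ - x₂|}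

/-- The average `ξ_φ(w) = (1/2π)·∫₀^{2π} (φ(e^{ix}) − w)/(1 − w̄·φ(e^{ix})) dx`
of a circle map `φ` taken at `w` in the unit disk. -/
noncomputable def avgMap (φ : ℂ → ℂ) (w : ℂ) : ℂ :=
  (1 / (2 * Real.pi)) • ∫ x in (0 : ℝ)..(2 * Real.pi),
    (φ (Complex.exp (Complex.I * (x : ℂ))) - w) /
      (1 - (starRingEnd ℂ) w * φ (Complex.exp (Complex.I * (x : ℂ))))

open Complex Metric Function
open scoped Real ComplexConjugate

noncomputable def mobius (w z : ℂ) : ℂ := (z - w) / (1 - conj w * z)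

lemma re_one_sub_mul_pos {a z : ℂ} (ha : ‖a‖ < 1) (hz : ‖z‖ ≤ 1) : 0 < (1 - a * z).re := by
  have : (a * z).re < 1 :=
    (re_le_norm _).trans_lt (by rw [norm_mul]; nlinarith [norm_nonneg a, norm_nonneg z])
  simp only [sub_re, one_re]
  linarith

lemma one_sub_mul_ne_zero {a z : ℂ} (ha : ‖a‖ < 1) (hz : ‖z‖ ≤ 1) : 1 - a * z ≠ 0 :=
  slitPlane_ne_zero (Or.inl (re_one_sub_mul_pos ha hz))

lemma re_one_add_div_one_sub_pos {z : ℂ} (hz : ‖z‖ < 1) : 0 < ((1 + z) / (1 - z)).re := by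
  have hz' : z.re ^ 2 + z.im ^ 2 < 1 := by
    have := sq_norm_sub_sq_re z
    nlinarith [norm_nonneg z]
  have hden : 0 < normSq (1 - z) := normSq_pos.2 (sub_ne_zero.2 fun h => by simp [← h] at hz)
  rw [div_re, ← add_div]
  apply div_pos _ hden
  simp only [add_re, sub_re, one_re, add_im, sub_im, one_im]
  nlinarith

lemma norm_circleMap_sub_circleMap_le (a b : ℝ) :
    ‖circleMap 0 1 a - circleMap 0 1 b‖ ≤ |a - b| := by
  have : circleMap 0 1 a - circleMap 0 1 b = circleMap 0 1 b * (exp (I * ↑(a - b)) - 1) := by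
    simp only [circleMap_zero, ofReal_one, one_mul, mul_sub, ← exp_add]
    push_cast
    ring_nf
  rw [this, norm_mul, norm_circleMap_zero, abs_one, one_mul]
  exact Real.norm_exp_I_mul_ofReal_sub_one_le

lemma integral_comp_add_sub_comp_sub {f : ℝ → ℝ} {T : ℝ} (hf : Continuous f)
    (hT : Periodic (fun x => f x - x) T) (a : ℝ) :
    ∫ x in 0..T, (f (x + a) - f (x - a)) = 2 * a * T := by
  set g := fun x => f x - x
  have hshift (b : ℝ) : ∫ x in 0..T, g (x + b) = ∫ x in 0..T, g x := by
    rw [intervalIntegral.integral_comp_add_right, zero_add, add_comm T,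
      hT.intervalIntegral_add_eq b 0, zero_add]
  have hsplit : (fun x => f (x + a) - f (x - a)) = fun x => g (x + a) - g (x + -a) + 2 * a := by
    ext x
    simp only [g]
    ring_nf
  have hg (b : ℝ) : Continuous fun x => g (x + b) :=
    (hf.sub continuous_id).comp (continuous_add_const b)
  rw [hsplit, intervalIntegral.integral_add _ intervalIntegrable_const,
    intervalIntegral.integral_sub ((hg a).intervalIntegrable _ _)
      ((hg (-a)).intervalIntegrable _ _), hshift, hshift, intervalIntegral.integral_const]
  · simp only [sub_self, sub_zero, zero_add, smul_eq_mul]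
    ring
  · exact ((hg a).sub (hg (-a))).intervalIntegrable _ _

section Mobius

variable {w : ℂ}

lemma differentiableOn_mobius (hw : ‖w‖ < 1) : DifferentiableOn ℂ (mobius w) (closedBall 0 1) :=
  fun z hz => ((differentiableAt_id.sub_const w).div
    ((differentiableAt_const 1).sub (differentiableAt_id.const_mul _))
    (one_sub_mul_ne_zero (by rwa [norm_conj]) (by simpa using hz))).differentiableWithinAt

lemma circleAverage_mobius (hw : ‖w‖ < 1) : Real.circleAverage (mobius w) 0 1 = -w := by
  have := ((differentiableOn_mobius hw).diffContOnCl_ball (c := 0) (R := |1|)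
    (by simp)).circleAverage
  simpa [mobius] using this

noncomputable def mobiusAngle (w : ℂ) (x : ℝ) : ℝ :=
  x - 2 * (log (1 - conj w * circleMap 0 1 x)).im

lemma mobius_circleMap (hw : ‖w‖ < 1) (x : ℝ) :
    mobius w (circleMap 0 1 x) = circleMap 0 1 (mobiusAngle w x) := by
  set e := circleMap 0 1 x
  set d := 1 - conj w * e
  have hd : d ≠ 0 := one_sub_mul_ne_zero (by rwa [norm_conj]) (by simp [e])
  have he : e * conj e = 1 := by rw [mul_conj, normSq_eq_norm_sq]; simp [e]
  have hnum : e - w = e * conj d := by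
    simp only [d, map_sub, map_one, map_mul, conj_conj]
    linear_combination w * he
  have hquot : conj d / d = exp (-(2 * (log d).im) * I) := by
    rw [← exp_log hd, ← exp_conj, ← exp_sub, exp_log hd, ← neg_sub, sub_conj]
    push_cast
    ring_nf
  rw [mobius, hnum, mul_div_assoc, hquot]
  simp only [mobiusAngle, d, e, circleMap_zero, ofReal_one, one_mul, ← exp_add]
  push_cast
  ring_nf

lemma hasDerivAt_mobiusAngle (hw : ‖w‖ < 1) (x : ℝ) :
    HasDerivAt (mobiusAngle w)
      ((1 + conj w * circleMap 0 1 x) / (1 - conj w * circleMap 0 1 x)).re x := by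
  set z := conj w * circleMap 0 1 x
  have hslit : 1 - z ∈ slitPlane := Or.inl (re_one_sub_mul_pos (by rwa [norm_conj]) (by simp))
  have hlog := (((hasDerivAt_circleMap 0 1 x).const_mul (conj w)).const_sub 1).clog_real hslit
  set v := -(conj w * (circleMap 0 1 x * I)) / (1 - z)
  have him : HasDerivAt (fun t => (log (1 - conj w * circleMap 0 1 t)).im) v.im x :=
    imCLM.hasFDerivAt.comp_hasDerivAt x hlog
  have hz : (1 + z) / (1 - z) = 1 + 2 * (I * v) := by
    simp only [v]
    field_simp [slitPlane_ne_zero hslit]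
    ring_nf
    rw [I_sq]
    ring
  have hre : ((1 + z) / (1 - z)).re = 1 - 2 * v.im := by
    rw [hz]
    simp only [add_re, one_re, mul_re, re_ofNat, im_ofNat, I_re, I_im, zero_mul, one_mul,
      zero_sub, mul_neg, mul_im, zero_add, sub_zero]
    ring
  rw [hre]
  exact (hasDerivAt_id x).sub (him.const_mul 2)

lemma strictMono_mobiusAngle (hw : ‖w‖ < 1) : StrictMono (mobiusAngle w) :=
  strictMono_of_deriv_pos fun x => (hasDerivAt_mobiusAngle hw x).deriv ▸
    re_one_add_div_one_sub_pos (by simpa [norm_conj] using hw)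

lemma continuous_mobiusAngle (hw : ‖w‖ < 1) : Continuous (mobiusAngle w) :=
  continuous_iff_continuousAt.2 fun x => (hasDerivAt_mobiusAngle hw x).continuousAt

variable (w) in
lemma periodic_mobiusAngle_sub : Periodic (fun x => mobiusAngle w x - x) (2 * π) := by
  intro x
  simp only [mobiusAngle, periodic_circleMap 0 1 x]
  ring

lemma norm_mobius_circleMap_sub_lt (hw : ‖w‖ < 1) {x θ ε : ℝ} (hθ : |θ| < ε) :
    ‖mobius w (circleMap 0 1 x) - mobius w (circleMap 0 1 (x + θ))‖ <
      mobiusAngle w (x + ε) - mobiusAngle w (x - ε) := by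
  rw [mobius_circleMap hw, mobius_circleMap hw]
  refine (norm_circleMap_sub_circleMap_le _ _).trans_lt ?_
  have hmono := strictMono_mobiusAngle hw
  obtain ⟨hθl, hθr⟩ := abs_lt.1 hθ
  have := hmono (show x - ε < x by linarith)
  have := hmono (show x < x + ε by linarith)
  have := hmono (show x - ε < x + θ by linarith)
  have := hmono (show x + θ < x + ε by linarith)
  rw [abs_sub_lt_iff]
  constructor <;> linarith

end Mobius

lemma avgMap_eq_circleAverage (φ : ℂ → ℂ) (w : ℂ) :
    avgMap φ w = Real.circleAverage (fun z => mobius w (φ z)) 0 1 := by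
  simp [avgMap, Real.circleAverage, circleMap_zero, mobius, mul_comm I]

lemma integral_mobius_sub_mobius_comp_of_avgMap_eq_zero {φ : ℂ → ℂ} {w : ℂ} (hw : ‖w‖ < 1)
    (hq : Continuous fun x => mobius w (φ (circleMap 0 1 x))) (hbar : avgMap φ w = 0) :
    ∫ x in 0..2 * π, (mobius w (circleMap 0 1 x) - mobius w (φ (circleMap 0 1 x))) =
      (2 * π) • -w := by
  have hp : Continuous fun x => mobius w (circleMap 0 1 x) :=
    (differentiableOn_mobius hw).continuousOn.comp_continuous (continuous_circleMap 0 1) (by simp)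
  rw [avgMap_eq_circleAverage, Real.circleAverage_def, smul_eq_zero] at hbar
  rw [← circleAverage_mobius hw, Real.circleAverage_def, smul_inv_smul₀ Real.two_pi_pos.ne',
    intervalIntegral.integral_sub (hp.intervalIntegrable _ _) (hq.intervalIntegrable _ _),
    hbar.resolve_left (by positivity), sub_zero]

lemma exists_eq_circleMap_add_of_dS1_lt {u : ℂ} {x ε : ℝ} (hu : ‖u‖ = 1)
    (h : dS1 u (circleMap 0 1 x) < ε) : ∃ θ, |θ| < ε ∧ u = circleMap 0 1 (x + θ) := by
  have hu' : u = exp (I * arg u) := by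
    simpa [hu, mul_comm] using (norm_mul_exp_arg_mul_I u).symm
  unfold dS1 at h
  obtain ⟨_, ⟨x₁, x₂, hu₁, hx₂, rfl⟩, hlt⟩ := exists_lt_of_csInf_lt
    (by exact ⟨_, arg u, x, hu', by simp [circleMap_zero, mul_comm], rfl⟩) h
  refine ⟨x₁ - x₂, hlt, ?_⟩
  calc u = exp (I * x₂) * exp (I * ↑(x₁ - x₂)) := by
        rw [hu₁, ← exp_add]
        push_cast
        ring_nf
    _ = circleMap 0 1 (x + (x₁ - x₂)) := by
        rw [← hx₂]
        simp only [circleMap_zero, ofReal_one, one_mul, ← exp_add]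
        push_cast
        ring_nf

theorem stmt_8_general (ε : ℝ) (φ : ℂ → ℂ)
    (hcont : ContinuousOn φ {z : ℂ | ‖z‖ = 1})
    (hmaps : ∀ ζ : ℂ, ‖ζ‖ = 1 → ‖φ ζ‖ = 1)
    (hclose : ∀ ζ : ℂ, ‖ζ‖ = 1 → dS1 (φ ζ) ζ < ε) :
    ∀ w : ℂ, ‖w‖ < 1 → avgMap φ w = 0 → ‖w‖ < 2 * ε := by
  intro w hw hbar
  have hcircle (x : ℝ) : ‖circleMap 0 1 x‖ = 1 := by simp
  have hmob := (differentiableOn_mobius hw).continuousOn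
  set p : ℝ → ℂ := fun x => mobius w (circleMap 0 1 x)
  set q : ℝ → ℂ := fun x => mobius w (φ (circleMap 0 1 x))
  have hp : Continuous p := hmob.comp_continuous (continuous_circleMap 0 1) (by simp)
  have hq : Continuous q := hmob.comp_continuous
    (hcont.comp_continuous (continuous_circleMap 0 1) hcircle) (by simp [hmaps _ (hcircle _)])
  have hlt (x : ℝ) : ‖p x - q x‖ < mobiusAngle w (x + ε) - mobiusAngle w (x - ε) := by
    obtain ⟨θ, hθ, hφ⟩ :=
      exists_eq_circleMap_add_of_dS1_lt (hmaps _ (hcircle x)) (hclose _ (hcircle x))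
    simpa only [p, q, hφ] using norm_mobius_circleMap_sub_lt hw hθ
  have hΘ := continuous_mobiusAngle hw
  refine lt_of_mul_lt_mul_left ?_ Real.two_pi_pos.le
  calc 2 * π * ‖w‖ = ‖∫ x in 0..2 * π, (p x - q x)‖ := by
        rw [integral_mobius_sub_mobius_comp_of_avgMap_eq_zero hw hq hbar, norm_smul, norm_neg,
          Real.norm_of_nonneg Real.two_pi_pos.le]
    _ ≤ ∫ x in 0..2 * π, ‖p x - q x‖ :=
        intervalIntegral.norm_integral_le_integral_norm Real.two_pi_pos.le
    _ < ∫ x in 0..2 * π, (mobiusAngle w (x + ε) - mobiusAngle w (x - ε)) :=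
        intervalIntegral.integral_lt_integral_of_continuousOn_of_le_of_exists_lt Real.two_pi_pos
          (hp.sub hq).norm.continuousOn
          ((hΘ.comp (continuous_add_const ε)).sub (hΘ.comp (continuous_sub_right ε))).continuousOn
          (fun x _ => (hlt x).le) ⟨0, by simp [Real.pi_pos.le], hlt 0⟩
    _ = 2 * π * (2 * ε) := by
        rw [integral_comp_add_sub_comp_sub hΘ (periodic_mobiusAngle_sub w)]
        ring

/-- If `φ : S¹ → S¹` is continuous with `d_{S¹}(φ(ζ), ζ) < ε` for all
`ζ ∈ S¹`, then any barycenter `w ∈ 𝔻` of `φ` (i.e. `ξ_φ(w) = 0`) satisfies `|w| < 2ε`. -/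
theorem stmt_8 (ε : ℝ) (hε : 0 < ε) (φ : ℂ → ℂ)
    (hcont : ContinuousOn φ {z : ℂ | ‖z‖ = 1})
    (hmaps : ∀ ζ : ℂ, ‖ζ‖ = 1 → ‖φ ζ‖ = 1)
    (hclose : ∀ ζ : ℂ, ‖ζ‖ = 1 → dS1 (φ ζ) ζ < ε) :
    ∀ w : ℂ, ‖w‖ < 1 → avgMap φ w = 0 → ‖w‖ < 2 * ε :=
  stmt_8_general ε φ hcont hmaps hclose
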